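/- arXiv:1811.06459 — 3 statements merged into one kernel-verified Lean document; each statement's English description precedes it below -/
import Mathlib

section
/- Łoś–Tarski theorem (the case k = 0 of GLT(k)): let τ be a finite first-order vocabulary, V an FO(τ) theory, and φ an FO(τ) sentence. Then φ is preserved under substructures modulo V (i.e., whenever a τ-structure 𝔄 satisfies V ∪ {φ} and 𝔅 is a substructure of 𝔄 satisfying V, then 𝔅 satisfies φ) if and only if φ is equivalent modulo V to a universal sentence, i.e., a prenex sentence ∀y₁…∀y_n ψ with ψ quantifier-free. (All structures here are arbitrary, possibly infinite.) -/
open FirstOrder Language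

universe u v w

namespace GLTPaper

variable {L : FirstOrder.Language.{u, v}}

/-- A sentence `φ` is preserved under substructures modulo a theory `V` if whenever a
(nonempty) structure `M` satisfies `V ∪ {φ}` and `N` is a (nonempty) substructure of `M`
satisfying `V`, then `N` satisfies `φ`. -/
def PreservedUnderSubstructuresModulo (V : L.Theory) (φ : L.Sentence) : Prop :=
  ∀ (M : Type w) [L.Structure M] [Nonempty M], M ⊨ V → M ⊨ φ →
    ∀ N : L.Substructure M, (N : Set M).Nonempty → (N : Type w) ⊨ V → (N : Type w) ⊨ φ

/-!
Let `Ψ` be the set of universal consequences of `V ∪ {φ}`. A countable model `B` of `V ∪ Ψ`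
embeds into a model `A` of `V ∪ {φ}`: by compactness it suffices that every quantifier-free fact
about finitely many elements of `B` be consistent with `V ∪ {φ}`, and if one were not, its
universal negation would lie in `Ψ`. If `φ` is preserved under substructures modulo `V`, the copy
of `B` inside `A` satisfies `φ`, so `V ∪ Ψ ⊨ φ`; by compactness `φ` is then equivalent modulo `V`
to a finite conjunction of members of `Ψ`, which is again universal. Conversely, universal
sentences pass to substructures. Since the vocabulary is finite, all models involved can be taken
countable, hence in the universe the statement quantifies over.
-/

open Structure BoundedFormula Cardinal

section Formulas

variable {α β : Type*} {M : Type*} [L.Structure M]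

theorem _root_.FirstOrder.Language.BoundedFormula.IsUniversal.alls {n : ℕ}
    {φ : L.BoundedFormula α n} (h : φ.IsUniversal) : φ.alls.IsUniversal := by
  induction n with
  | zero => exact h
  | succ n ih => exact ih h.all

theorem _root_.FirstOrder.Language.BoundedFormula.IsQF.iInf [Finite β] {n : ℕ}
    {f : β → L.BoundedFormula α n} (h : ∀ b, (f b).IsQF) : (BoundedFormula.iInf f).IsQF := by
  let _ := Fintype.ofFinite β
  suffices ∀ l : List β, ((l.map f).foldr (· ⊓ ·) ⊤).IsQF from this _
  intro l
  induction l with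
  | nil => exact IsQF.top
  | cons b l ih => exact (h b).inf ih

theorem _root_.FirstOrder.Language.BoundedFormula.IsQF.restrictFreeVar [DecidableEq α] {n : ℕ}
    {φ : L.BoundedFormula α n} (h : φ.IsQF) (f : φ.freeVarFinset → β) :
    (φ.restrictFreeVar f).IsQF := by
  induction h with
  | falsum => exact isQF_bot
  | of_isAtomic h =>
    cases h with
    | equal => exact (IsAtomic.equal _ _).isQF
    | rel => exact (IsAtomic.rel _ _).isQF
  | imp _ _ ih₁ ih₂ => exact (ih₁ _).imp (ih₂ _)

-- Only the finitely many free variables are quantified, so `α` may be infinite.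
noncomputable def _root_.FirstOrder.Language.Formula.allClosure [DecidableEq α]
    (φ : L.Formula α) : L.Sentence :=
  Formula.iAlls φ.freeVarFinset (Formula.relabel Sum.inr (φ.restrictFreeVar id))

theorem _root_.FirstOrder.Language.Formula.realize_allClosure [DecidableEq α] [Nonempty M]
    {φ : L.Formula α} : M ⊨ φ.allClosure ↔ ∀ v : α → M, φ.Realize v := by
  simp only [Formula.allClosure, Sentence.Realize, Formula.realize_iAlls, Formula.realize_relabel,
    Sum.elim_comp_inr]
  refine ⟨fun h v => ?_, fun h i => ?_⟩
  · exact (realize_restrictFreeVar (f := id) v fun _ => rfl).1 (h (v ∘ Subtype.val))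
  · let v := Function.extend Subtype.val i fun _ => Classical.arbitrary M
    exact (realize_restrictFreeVar (f := id) v
      fun a => (Subtype.val_injective.extend_apply i _ a).symm).2 (h _)

theorem realize_alls_liftAt_inf_relabel [Nonempty M] {n₁ n₂ : ℕ} (φ₁ : L.BoundedFormula α n₁)
    (φ₂ : L.BoundedFormula α n₂) (v : α → M) :
    (φ₁.liftAt n₂ n₁ ⊓ φ₂.relabel Sum.inl).alls.Realize v ↔
      φ₁.alls.Realize v ∧ φ₂.alls.Realize v := by
  have hsurj₁ := (Fin.castAdd_injective n₁ n₂).surjective_comp_right (γ := M)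
  have hsurj₂ := (Fin.natAdd_injective n₂ n₁).surjective_comp_right (γ := M)
  simp only [realize_alls, realize_inf, realize_liftAt le_rfl, realize_relabel,
    Fin.is_lt, ↓reduceIte, Sum.elim_comp_inl, forall_and, ← hsurj₁.forall, ← hsurj₂.forall]

end Formulas

def IsUniversalSentence (θ : L.Sentence) : Prop :=
  ∃ (n : ℕ) (χ : L.BoundedFormula Empty n), χ.IsQF ∧ θ = χ.alls

theorem isUniversalSentence_allClosure {α : Type*} [DecidableEq α] {φ : L.Formula α}
    (h : φ.IsQF) : IsUniversalSentence φ.allClosure :=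
  ⟨_, _, ((h.restrictFreeVar id).relabel _).relabel _, rfl⟩

theorem IsUniversalSentence.realize_of_embedding {θ : L.Sentence} (hθ : IsUniversalSentence θ)
    {M N : Type*} [L.Structure M] [L.Structure N] (f : M ↪[L] N) (h : N ⊨ θ) : M ⊨ θ := by
  obtain ⟨n, χ, hχ, rfl⟩ := hθ
  refine hχ.isUniversal.alls.realize_embedding f ?_
  rwa [Subsingleton.elim (f ∘ default) default, Subsingleton.elim (f ∘ default) default]

theorem exists_isUniversalSentence_iff_and {θ₁ θ₂ : L.Sentence} (h₁ : IsUniversalSentence θ₁)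
    (h₂ : IsUniversalSentence θ₂) :
    ∃ θ : L.Sentence, IsUniversalSentence θ ∧
      ∀ (M : Type*) [L.Structure M] [Nonempty M], M ⊨ θ ↔ M ⊨ θ₁ ∧ M ⊨ θ₂ := by
  obtain ⟨n₁, χ₁, hχ₁, rfl⟩ := h₁
  obtain ⟨n₂, χ₂, hχ₂, rfl⟩ := h₂
  exact ⟨_, ⟨_, _, hχ₁.liftAt.inf (hχ₂.relabel _), rfl⟩,
    fun M _ _ => realize_alls_liftAt_inf_relabel χ₁ χ₂ default⟩

theorem exists_isUniversalSentence_iff_forall_mem (s : Finset L.Sentence)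
    (hs : ∀ θ ∈ s, IsUniversalSentence θ) :
    ∃ θ : L.Sentence, IsUniversalSentence θ ∧
      ∀ (M : Type*) [L.Structure M] [Nonempty M], M ⊨ θ ↔ ∀ θ' ∈ s, M ⊨ θ' := by
  classical
  induction s using Finset.induction with
  | empty => exact ⟨_, ⟨0, ⊤, IsQF.top, rfl⟩, fun M _ _ => by simp [Sentence.Realize]⟩
  | insert θ₁ s _ ih =>
    obtain ⟨θ₂, h₂, hθ₂⟩ := ih fun θ hθ => hs θ (Finset.mem_insert_of_mem hθ)
    obtain ⟨θ, h, hθ⟩ := exists_isUniversalSentence_iff_and (hs θ₁ (s.mem_insert_self θ₁)) h₂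
    exact ⟨θ, h, fun M _ _ => by rw [hθ, hθ₂, Finset.forall_mem_insert]⟩

theorem exists_countable_model (hL : L.card ≤ ℵ₀) {T : L.Theory} (hT : T.IsSatisfiable) :
    ∃ M : Theory.ModelType.{u, v, w} T, Countable M := by
  obtain ⟨M⟩ := hT
  cases finite_or_infinite M with
  | inl _ =>
    have : Small.{w} M := Countable.toSmall M
    exact ⟨M.shrink, Countable.of_equiv M (equivShrink M)⟩
  | inr hM =>
    obtain ⟨N, hN⟩ := Theory.exists_model_card_eq ⟨M, hM⟩ ℵ₀ le_rfl (by simpa using hL)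
    exact ⟨N, mk_le_aleph0_iff.1 hN.le⟩

section Diagram

variable (L) in
def qfDiagram (M : Type*) [L.Structure M] : L[[M]].Theory :=
  Formula.equivSentence '' {φ : L.Formula M | φ.IsQF ∧ φ.Realize id}

variable {M : Type*} [L.Structure M] {N : Type*} [L.Structure N] [L[[M]].Structure N]
  [(L.lhomWithConstants M).IsExpansionOn N] [N ⊨ qfDiagram L M]

theorem realize_con_of_models_qfDiagram {φ : L.Formula M} (hφ : φ.IsQF) (hM : φ.Realize id) :
    φ.Realize fun m => (L.con m : N) :=
  (Formula.realize_equivSentence N φ).1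
    (Theory.realize_sentence_of_mem (qfDiagram L M) ⟨φ, ⟨hφ, hM⟩, rfl⟩)

theorem realize_con_iff_of_models_qfDiagram {φ : L.Formula M} (hφ : φ.IsQF) :
    (φ.Realize fun m => (L.con m : N)) ↔ φ.Realize id := by
  refine ⟨fun h => by_contra fun hn => ?_, realize_con_of_models_qfDiagram hφ⟩
  exact Formula.realize_not.1
    (realize_con_of_models_qfDiagram hφ.not (Formula.realize_not.2 hn)) h

variable (M N) in
def embeddingOfModelsQFDiagram : M ↪[L] N where
  toFun m := L.con m
  inj' m m' h := by
    simpa using (realize_con_iff_of_models_qfDiagram (N := N)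
      (φ := (Term.var m).equal (Term.var m')) (IsAtomic.equal _ _).isQF).1 (by simpa using h)
  map_fun' f x := by
    simpa [Function.comp_def] using ((realize_con_iff_of_models_qfDiagram (N := N)
      (φ := (Term.func f fun i => Term.var (x i)).equal (Term.var (funMap f x)))
      (IsAtomic.equal _ _).isQF).2 (by simp)).symm
  map_rel' r x := by
    simpa [Function.comp_def] using realize_con_iff_of_models_qfDiagram (N := N)
      (φ := r.formula fun i => Term.var (x i)) (IsAtomic.rel _ _).isQF

end Diagram

def universalConsequences (T : L.Theory) : L.Theory :=
  {θ | IsUniversalSentence θ ∧ T ⊨ᵇ θ}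

section UniversalConsequences

variable {T : L.Theory} {B : Type*} [L.Structure B] [Nonempty B]

theorem exists_model_realize_of_models_universalConsequences
    (hB : B ⊨ universalConsequences T) {φ : L.Formula B} (hφ : φ.IsQF) (hφB : φ.Realize id) :
    ∃ (M : Theory.ModelType.{u, v, max u v} T) (v : B → M), φ.Realize v := by
  classical
  by_contra! h
  have hT : T ⊨ᵇ φ.not.allClosure := Theory.models_sentence_iff.2 fun M =>
    Formula.realize_allClosure.2 fun v => Formula.realize_not.2 (h M v)
  have hBφ : B ⊨ φ.not.allClosure :=
    Theory.realize_sentence_of_mem (universalConsequences T)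
      ⟨isUniversalSentence_allClosure hφ.not, hT⟩
  exact Formula.realize_not.1 (Formula.realize_allClosure.1 hBφ id) hφB

theorem isSatisfiable_onTheory_union_qfDiagram (hB : B ⊨ universalConsequences T) :
    ((L.lhomWithConstants B).onTheory T ∪ qfDiagram L B).IsSatisfiable := by
  refine Theory.isSatisfiable_iff_isFinitelySatisfiable.2 fun T0 hT0 => ?_
  let D0 : Set (L.Formula B) := {φ | (φ.IsQF ∧ φ.Realize id) ∧ Formula.equivSentence φ ∈ T0}
  have : Finite D0 := ((T0.finite_toSet.preimage Formula.equivSentence.injective.injOn).subset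
    fun _ hφ => hφ.2).to_subtype
  obtain ⟨M, v, hv⟩ := exists_model_realize_of_models_universalConsequences hB
    (IsQF.iInf fun φ : D0 => φ.2.1.1) (Formula.realize_iInf.2 fun φ => φ.2.1.2)
  let : (constantsOn B).Structure M := constantsOn.structure v
  have : M ⊨ (L.lhomWithConstants B).onTheory T := (LHom.onTheory_model _ _).2 inferInstance
  have : M ⊨ (T0 : L[[B]].Theory) := (Theory.model_iff _).2 fun θ hθ => by
    rcases hT0 hθ with hθT | ⟨φ, hφ, rfl⟩
    · exact Theory.realize_sentence_of_mem _ hθT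
    · exact (Formula.realize_equivSentence M φ).2 (Formula.realize_iInf.1 hv ⟨φ, hφ, hθ⟩)
  exact Theory.Model.isSatisfiable M

theorem exists_embedding_of_models_universalConsequences (hL : L.card ≤ ℵ₀) (B : Type w)
    [L.Structure B] [Nonempty B] [Countable B] (hB : B ⊨ universalConsequences T) :
    ∃ A : Theory.ModelType.{u, v, w} T, Nonempty (B ↪[L] A) := by
  have hLB : L[[B]].card ≤ ℵ₀ := by
    rw [card_withConstants]
    exact add_le_aleph0.2 ⟨by simpa using hL, by simp⟩
  obtain ⟨A, -⟩ :=
    exists_countable_model.{_, _, w} hLB (isSatisfiable_onTheory_union_qfDiagram hB)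
  let : L.Structure A := (L.lhomWithConstants B).reduct A
  have : (L.lhomWithConstants B).IsExpansionOn A := LHom.isExpansionOn_reduct _ A
  have : A ⊨ T := ((L.lhomWithConstants B).onTheory_model T).1
    (A.is_model.mono Set.subset_union_left)
  have : A ⊨ qfDiagram L B := A.is_model.mono Set.subset_union_right
  exact ⟨.of T A, ⟨(embeddingOfModelsQFDiagram B A : B ↪[L] A)⟩⟩

end UniversalConsequences

theorem IsUniversalSentence.preservedUnderSubstructuresModulo {V : L.Theory} {φ θ : L.Sentence}
    (hθ : IsUniversalSentence θ)
    (h : ∀ (M : Type w) [L.Structure M] [Nonempty M], M ⊨ V → (M ⊨ φ ↔ M ⊨ θ)) :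
    PreservedUnderSubstructuresModulo.{u, v, w} V φ := by
  intro M _ _ hMV hMφ N hN hNV
  have : Nonempty N := hN.to_subtype
  exact (h N hNV).2 (hθ.realize_of_embedding N.subtype ((h M hMV).1 hMφ))

theorem PreservedUnderSubstructuresModulo.realize_of_embedding {V : L.Theory} {φ : L.Sentence}
    (h : PreservedUnderSubstructuresModulo.{u, v, w} V φ) {A B : Type w} [L.Structure A]
    [L.Structure B] [Nonempty B] (f : B ↪[L] A) (hAV : A ⊨ V) (hAφ : A ⊨ φ) (hBV : B ⊨ V) :
    B ⊨ φ := by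
  have : Nonempty A := Nonempty.map f ‹_›
  have : Nonempty f.toHom.range := Nonempty.map f.equivRange ‹_›
  have : f.toHom.range ⊨ V := StrongHomClass.theory_model f.equivRange
  exact (StrongHomClass.realize_sentence f.equivRange φ).2
    (h A hAV hAφ f.toHom.range Set.Nonempty.of_subtype this)

theorem PreservedUnderSubstructuresModulo.models_of_universalConsequences {V : L.Theory}
    {φ : L.Sentence} (h : PreservedUnderSubstructuresModulo.{u, v, w} V φ) (hL : L.card ≤ ℵ₀) :
    V ∪ universalConsequences (V ∪ {φ}) ⊨ᵇ φ := by
  refine (Theory.models_iff_not_satisfiable φ).2 fun hsat => ?_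
  obtain ⟨B, _⟩ := exists_countable_model.{u, v, w} hL hsat
  have hBV : B ⊨ V := B.is_model.mono (Set.subset_union_left.trans Set.subset_union_left)
  have hBU : B ⊨ universalConsequences (V ∪ {φ}) :=
    B.is_model.mono (Set.subset_union_right.trans Set.subset_union_left)
  have hBφ : ¬ B ⊨ φ := (Sentence.realize_not B).1
    (Theory.realize_sentence_of_mem (V ∪ universalConsequences (V ∪ {φ}) ∪ {φ.not})
      (Set.mem_union_right _ rfl))
  obtain ⟨A, ⟨f⟩⟩ := exists_embedding_of_models_universalConsequences hL B hBU
  exact hBφ (h.realize_of_embedding f (A.is_model.mono Set.subset_union_left)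
    (Theory.realize_sentence_of_mem (V ∪ {φ}) (Set.mem_union_right _ rfl)) hBV)

theorem exists_isUniversalSentence_iff_of_models {V : L.Theory} {φ : L.Sentence}
    (h : V ∪ universalConsequences (V ∪ {φ}) ⊨ᵇ φ) :
    ∃ θ : L.Sentence, IsUniversalSentence θ ∧
      ∀ (M : Type*) [L.Structure M] [Nonempty M], M ⊨ V → (M ⊨ φ ↔ M ⊨ θ) := by
  classical
  obtain ⟨T0, hT0, hT0φ⟩ := Theory.models_iff_finset_models.1 h
  let U0 := T0.filter (· ∈ universalConsequences (V ∪ {φ}))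
  obtain ⟨θ, hθ, hθU0⟩ := exists_isUniversalSentence_iff_forall_mem U0
    fun _ hθ' => (Finset.mem_filter.1 hθ').2.1
  refine ⟨θ, hθ, fun M _ _ hMV => ⟨fun hMφ => ?_, fun hMθ => ?_⟩⟩
  · have : M ⊨ V ∪ {φ} := Theory.model_union_iff.2 ⟨hMV, Theory.model_singleton_iff.2 hMφ⟩
    exact (hθU0 M).2 fun θ' hθ' => (Finset.mem_filter.1 hθ').2.2.realize_sentence M
  · have : M ⊨ (T0 : L.Theory) := (Theory.model_iff _).2 fun θ' hθ' => (hT0 hθ').elim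
      (Theory.realize_sentence_of_mem V)
      fun hU => (hθU0 M).1 hMθ θ' (Finset.mem_filter.2 ⟨hθ', hU⟩)
    exact hT0φ.realize_sentence M

/-- **Łoś–Tarski theorem** (the case `k = 0` of `GLT(k)`): over arbitrary structures, a
sentence `φ` is preserved under substructures modulo a theory `V` iff it is equivalent
modulo `V` to a universal sentence `∀y₁…∀y_n ψ` with `ψ` quantifier-free. -/
theorem los_tarski (hfin : Finite L.Symbols) (V : L.Theory) (φ : L.Sentence) :
    PreservedUnderSubstructuresModulo.{u, v, w} V φ ↔
      ∃ (n : ℕ) (ψ : L.BoundedFormula Empty n), ψ.IsQF ∧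
        ∀ (M : Type w) [L.Structure M] [Nonempty M], M ⊨ V →
          (M ⊨ φ ↔ M ⊨ ψ.alls) := by
  refine ⟨fun h => ?_, fun ⟨n, ψ, hψ, hiff⟩ => ?_⟩
  · obtain ⟨_, ⟨n, ψ, hψ, rfl⟩, hiff⟩ :=
      exists_isUniversalSentence_iff_of_models (h.models_of_universalConsequences mk_le_aleph0)
    exact ⟨n, ψ, hψ, fun M _ _ => hiff M⟩
  · exact IsUniversalSentence.preservedUnderSubstructuresModulo ⟨n, ψ, hψ, rfl⟩ hiff

end GLTPaper
end

section
/- Easy direction of GLT(k) for extension closure: let τ be a finite first-order vocabulary, V an FO(τ) theory, and k a natural number. Every ∀^k∃* sentence, i.e., every prenex sentence of the form ∀x₁…∀x_k ∃y₁…∃y_n ψ with ψ quantifier-free, is k-extension closed modulo V: if a τ-structure 𝔄 satisfies V and has a k-ary cover all of whose members satisfy V and the sentence, then 𝔄 satisfies the sentence. -/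
open FirstOrder Language

universe u v w

namespace GLTPaper

variable {L : FirstOrder.Language.{u, v}}

/-- Existentially quantify over the last `n` free (de Bruijn) variables of a bounded formula,
leaving the first `k` variables free. -/
def exsFrom (k : ℕ) : ∀ {n : ℕ}, L.BoundedFormula Empty (k + n) → L.BoundedFormula Empty k
  | 0, ψ => ψ
  | _ + 1, ψ => exsFrom k ψ.ex

/-- The `∀^k∃*` sentence `∀x₁…∀x_k ∃y₁…∃y_n ψ` built from a quantifier-free matrix `ψ`. -/
def forallExistsSentence (k n : ℕ) (ψ : L.BoundedFormula Empty (k + n)) : L.Sentence :=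
  (exsFrom k ψ).alls

/-- A `k`-ary cover of a structure `M` is a nonempty collection of (nonempty) substructures
of `M` such that every set of at most `k` elements of `M` is contained in some member. -/
def IsKAryCover (k : ℕ) {M : Type w} [L.Structure M] (R : Set (L.Substructure M)) : Prop :=
  R.Nonempty ∧ (∀ N ∈ R, (N : Set M).Nonempty) ∧
    ∀ C : Finset M, C.card ≤ k → ∃ N ∈ R, (C : Set M) ⊆ (N : Set M)

/-! The matrix `∃y₁…∃y_n ψ` is existential, so it is preserved by the inclusion of a
substructure into `M`. Given `x₁, …, x_k` in `M`, pick a member of the cover containing them;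
there the witnesses `y` exist, and they remain witnesses in `M`. -/

lemma isExistential_exsFrom (k : ℕ) :
    ∀ {n : ℕ} {ψ : L.BoundedFormula Empty (k + n)}, ψ.IsExistential →
      (exsFrom k ψ).IsExistential
  | 0, _, hψ => hψ
  | _ + 1, ψ, hψ => isExistential_exsFrom k (ψ := ψ.ex) hψ.ex

lemma IsKAryCover.exists_range_subset {k : ℕ} {M : Type w} [L.Structure M]
    {R : Set (L.Substructure M)} (hR : IsKAryCover k R) (xs : Fin k → M) :
    ∃ N ∈ R, Set.range xs ⊆ N := by
  classical
  obtain ⟨N, hNR, hsub⟩ := hR.2.2 (Finset.univ.image xs)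
    (Finset.card_image_le.trans (Finset.card_fin k).le)
  exact ⟨N, hNR, by simpa using hsub⟩

lemma realize_alls_of_forall_exists_substructure {k : ℕ} {M : Type w} [L.Structure M]
    {φ : L.BoundedFormula Empty k} (hφ : φ.IsExistential)
    (h : ∀ xs : Fin k → M, ∃ N : L.Substructure M, Set.range xs ⊆ N ∧ N ⊨ φ.alls) :
    M ⊨ φ.alls := by
  rw [Sentence.Realize, BoundedFormula.realize_alls]
  intro xs
  obtain ⟨N, hxs, hN⟩ := h xs
  rw [Sentence.Realize, BoundedFormula.realize_alls] at hN
  have hφN := hN (fun i => ⟨xs i, hxs ⟨i, rfl⟩⟩)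
  have hφM := hφ.realize_embedding N.subtype hφN
  rwa [Subsingleton.elim (N.subtype ∘ default) default] at hφM

theorem easy_direction_extension_closed_general (V : L.Theory) (k n : ℕ)
    (ψ : L.BoundedFormula Empty (k + n)) (hψ : ψ.IsQF) :
    ∀ (M : Type w) [L.Structure M] [Nonempty M], M ⊨ V →
      ∀ R : Set (L.Substructure M), IsKAryCover k R →
        (∀ N ∈ R, (N : Type w) ⊨ V ∧ (N : Type w) ⊨ forallExistsSentence k n ψ) →
        M ⊨ forallExistsSentence k n ψ := by
  intro M _ _ _ R hR hmodels
  refine realize_alls_of_forall_exists_substructure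
    (isExistential_exsFrom k hψ.isExistential) fun xs => ?_
  obtain ⟨N, hNR, hxs⟩ := hR.exists_range_subset xs
  exact ⟨N, hxs, (hmodels N hNR).2⟩

/-- **Easy direction of `GLT(k)` for extension closure**: every `∀^k∃*` sentence
`∀x₁…∀x_k ∃y₁…∃y_n ψ` (with `ψ` quantifier-free) is `k`-extension closed modulo any theory
`V`: if a (nonempty) structure `M` satisfies `V` and has a `k`-ary cover all of whose members
satisfy `V` and the sentence, then `M` satisfies the sentence. -/
theorem easy_direction_extension_closed (hfin : Finite L.Symbols) (V : L.Theory) (k n : ℕ)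
    (ψ : L.BoundedFormula Empty (k + n)) (hψ : ψ.IsQF) :
    ∀ (M : Type w) [L.Structure M] [Nonempty M], M ⊨ V →
      ∀ R : Set (L.Substructure M), IsKAryCover k R →
        (∀ N ∈ R, (N : Type w) ⊨ V ∧ (N : Type w) ⊨ forallExistsSentence k n ψ) →
        M ⊨ forallExistsSentence k n ψ :=
  easy_direction_extension_closed_general V k n ψ hψ

end GLTPaper
end

section
/- The sentence φ_k is hereditary over the class of all finite τ-structures: for every finite τ-structure 𝔄 satisfying φ_k and every substructure 𝔅 of 𝔄, the structure 𝔅 satisfies φ_k. Equivalently, ¬φ_k is extension closed over finite τ-structures: if a finite τ-structure 𝔄 satisfies ¬φ_k and 𝔅 is a finite extension of 𝔄 (i.e., 𝔄 is a substructure of 𝔅), then 𝔅 satisfies ¬φ_k. -/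
open FirstOrder Language

namespace LTFinite

/-- Relation symbols of the vocabulary `τ = {≤, S, P, c, d}`: binary `≤` and `S`, unary `P`. -/
inductive TauRel : ℕ → Type
  | le : TauRel 2
  | succ : TauRel 2
  | pelt : TauRel 1

/-- Function symbols of `τ`: the constants `c` and `d`. -/
inductive TauFun : ℕ → Type
  | c : TauFun 0
  | d : TauFun 0

/-- The vocabulary `τ = {≤, S, P, c, d}`. -/
def tau : FirstOrder.Language := ⟨TauFun, TauRel⟩

/-- The atomic formula `t₁ ≤ t₂`. -/
def leF {n : ℕ} (t₁ t₂ : tau.Term (Empty ⊕ Fin n)) : tau.BoundedFormula Empty n :=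
  Relations.boundedFormula₂ (TauRel.le : tau.Relations 2) t₁ t₂

/-- The atomic formula `S(t₁, t₂)`. -/
def sF {n : ℕ} (t₁ t₂ : tau.Term (Empty ⊕ Fin n)) : tau.BoundedFormula Empty n :=
  Relations.boundedFormula₂ (TauRel.succ : tau.Relations 2) t₁ t₂

/-- The atomic formula `P(t)`. -/
def pF {n : ℕ} (t : tau.Term (Empty ⊕ Fin n)) : tau.BoundedFormula Empty n :=
  Relations.boundedFormula₁ (TauRel.pelt : tau.Relations 1) t

/-- The constant term `c`. -/
def cT {n : ℕ} : tau.Term (Empty ⊕ Fin n) := Constants.term TauFun.c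

/-- The constant term `d`. -/
def dT {n : ℕ} : tau.Term (Empty ⊕ Fin n) := Constants.term TauFun.d

/-- `ξ₁`: `≤` is a (reflexive) linear order. -/
def xi1 : tau.Sentence :=
  ∀' ∀' ∀' ((leF &0 &0) ⊓ (((leF &0 &1) ⊓ (leF &1 &2)) ⟹ (leF &0 &2)) ⊓
    (((leF &0 &1) ⊓ (leF &1 &0)) ⟹ Term.bdEqual (&0) (&1)) ⊓ ((leF &0 &1) ⊔ (leF &1 &0)))

/-- `ξ₂`: `c` is minimum and `d` is maximum under `≤`. -/
def xi2 : tau.Sentence :=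
  ∀' ((leF cT &0) ⊓ (leF &0 dT))

/-- `ξ₃`: `S(x, y)` implies that `y` is the successor of `x` under `≤`. -/
def xi3 : tau.Sentence :=
  ∀' ∀' ∀' ((sF &0 &1) ⟹
    ((leF &0 &1) ⊓ ∼(Term.bdEqual (&0) (&1)) ⊓ ((leF &0 &2) ⟹ ((Term.bdEqual (&2) (&0)) ⊔ (leF &1 &2)))))

/-- `ξ₄`: every element other than `d` has an `S`-successor. -/
def xi4 : tau.Sentence :=
  ∀' ((∼(Term.bdEqual (&0) dT)) ⟹ ∃' (sF &0 &1))

/-- `ξ₅ k`: at most `k` elements satisfy `P`. -/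
def xi5 (k : ℕ) : tau.Sentence :=
  ((List.ofFn fun i : Fin (k + 1) => pF (Term.var (Sum.inr i))).foldr (· ⊓ ·) ⊤ ⟹
      (((List.finRange (k + 1) ×ˢ List.finRange (k + 1)).filter (fun ij => ij.1 < ij.2)).map
          fun ij => Term.bdEqual (Term.var (Sum.inr ij.1)) (Term.var (Sum.inr ij.2))).foldr
        (· ⊔ ·) ⊥).alls

/-- The sentence `φ_k := (ξ₁ ∧ ξ₂ ∧ ξ₃) ∧ ¬(ξ₄ ∧ ξ₅)`. -/
def phi (k : ℕ) : tau.Sentence :=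
  (xi1 ⊓ xi2 ⊓ xi3) ⊓ ∼(xi4 ⊓ xi5 k)

/-! The conjuncts ξ₁, ξ₂, ξ₃ are universal, so they pass to every substructure `N` of a model
`M`. If moreover `N ⊨ ξ₄`, then `N` contains the minimum `c` and, together with each of its
elements other than the maximum `d`, an `S`-successor, which by ξ₃ covers it in `≤`. In a finite
linear order the elements reachable from the minimum along covers are all elements, so `N = M`
and `N ⊨ ξ₄ ∧ ξ₅` would give `M ⊨ ξ₄ ∧ ξ₅`. Hence `N ⊨ ¬(ξ₄ ∧ ξ₅)` as well. -/

theorem _root_.Set.eq_univ_of_isBot_mem_of_covBy_closed {α : Type*} [LinearOrder α] [Finite α]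
    {s : Set α} {c : α} (hc : IsBot c) (hcs : c ∈ s)
    (hs : ∀ x ∈ s, ¬IsMax x → ∃ y ∈ s, x ⋖ y) : s = Set.univ := by
  let := LocallyFiniteOrder.ofFiniteIcc fun a b : α => Set.toFinite (Set.Icc a b)
  refine Set.eq_univ_of_forall fun x => ?_
  induction le_iff_reflTransGen_covBy.1 (hc x) with
  | refl => exact hcs
  | tail _ hyz hy =>
    obtain ⟨z, hzs, hyz'⟩ := hs _ hy hyz.lt.not_isMax
    exact hyz'.unique_right hyz ▸ hzs

theorem _root_.FirstOrder.Language.Substructure.realize_sentence_of_isUniversal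
    {L : Language} {M : Type*} [L.Structure M] {φ : L.Sentence} (hφ : φ.IsUniversal)
    (S : L.Substructure M) (h : M ⊨ φ) : S ⊨ φ := by
  refine hφ.realize_embedding S.subtype ?_
  rwa [Subsingleton.elim (S.subtype ∘ default) default,
    Subsingleton.elim (S.subtype ∘ default) default]

section Universal

open BoundedFormula

theorem isQF_leF {n : ℕ} (t₁ t₂ : tau.Term (Empty ⊕ Fin n)) : (leF t₁ t₂).IsQF :=
  Relations.isQF _ _

theorem isQF_sF {n : ℕ} (t₁ t₂ : tau.Term (Empty ⊕ Fin n)) : (sF t₁ t₂).IsQF :=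
  Relations.isQF _ _

theorem isUniversal_xi1 : xi1.IsUniversal :=
  ((((isQF_leF _ _).inf (((isQF_leF _ _).inf (isQF_leF _ _)).imp (isQF_leF _ _))).inf
    (((isQF_leF _ _).inf (isQF_leF _ _)).imp (IsAtomic.equal _ _).isQF)).inf
    ((isQF_leF _ _).sup (isQF_leF _ _))).isUniversal.all.all.all

theorem isUniversal_xi2 : xi2.IsUniversal :=
  ((isQF_leF _ _).inf (isQF_leF _ _)).isUniversal.all

theorem isUniversal_xi3 : xi3.IsUniversal :=
  ((isQF_sF _ _).imp (((isQF_leF _ _).inf (IsAtomic.equal _ _).isQF.not).inf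
    ((isQF_leF _ _).imp ((IsAtomic.equal _ _).isQF.sup (isQF_leF _ _))))).isUniversal.all.all.all

end Universal

section Semantics

variable {M : Type*} [tau.Structure M]

def tauLE (a b : M) : Prop := Structure.RelMap (L := tau) TauRel.le ![a, b]

def tauS (a b : M) : Prop := Structure.RelMap (L := tau) TauRel.succ ![a, b]

variable (M) in
def tauC : M := constantMap (L := tau) TauFun.c

variable (M) in
def tauD : M := constantMap (L := tau) TauFun.d

@[simp] theorem realize_leF {n : ℕ} {v : Empty → M} {xs : Fin n → M}
    {t₁ t₂ : tau.Term (Empty ⊕ Fin n)} :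
    (leF t₁ t₂).Realize v xs ↔ tauLE (t₁.realize (Sum.elim v xs)) (t₂.realize (Sum.elim v xs)) :=
  BoundedFormula.realize_rel₂

@[simp] theorem realize_sF {n : ℕ} {v : Empty → M} {xs : Fin n → M}
    {t₁ t₂ : tau.Term (Empty ⊕ Fin n)} :
    (sF t₁ t₂).Realize v xs ↔ tauS (t₁.realize (Sum.elim v xs)) (t₂.realize (Sum.elim v xs)) :=
  BoundedFormula.realize_rel₂

@[simp] theorem realize_cT {n : ℕ} {v : Empty ⊕ Fin n → M} : cT.realize v = tauC M :=
  Term.realize_constants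

@[simp] theorem realize_dT {n : ℕ} {v : Empty ⊕ Fin n → M} : dT.realize v = tauD M :=
  Term.realize_constants

theorem realize_xi1 : M ⊨ xi1 ↔ ∀ a b c : M, tauLE a a ∧ (tauLE a b → tauLE b c → tauLE a c) ∧
    (tauLE a b → tauLE b a → a = b) ∧ (tauLE a b ∨ tauLE b a) := by
  simp [Sentence.Realize, Formula.Realize, xi1, Fin.snoc, and_assoc]

theorem realize_xi2 : M ⊨ xi2 ↔ ∀ a : M, tauLE (tauC M) a ∧ tauLE a (tauD M) := by
  simp [Sentence.Realize, Formula.Realize, xi2, Fin.snoc]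

theorem realize_xi3 : M ⊨ xi3 ↔ ∀ a b c : M,
    tauS a b → tauLE a b ∧ a ≠ b ∧ (tauLE a c → c = a ∨ tauLE b c) := by
  simp [Sentence.Realize, Formula.Realize, xi3, Fin.snoc, and_assoc]

theorem realize_xi4 : M ⊨ xi4 ↔ ∀ a : M, a ≠ tauD M → ∃ b : M, tauS a b := by
  simp [Sentence.Realize, Formula.Realize, xi4, Fin.snoc]

end Semantics

section Substructure

variable {M : Type*} [tau.Structure M] {N : tau.Substructure M}

theorem tauS_coe {a b : N} : tauS (a : M) b ↔ tauS a b := by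
  have : (![(a : M), b] : Fin 2 → M) = N.subtype ∘ ![a, b] :=
    funext fun i => by fin_cases i <;> rfl
  rw [tauS, tauS, this]
  exact N.subtype.map_rel _ _

theorem tauD_coe : (tauD N : M) = tauD M :=
  N.subtype.map_constants TauFun.d

end Substructure

variable {M : Type*} [tau.Structure M]

noncomputable abbrev linearOrderOfRealizeXi1 (h : M ⊨ xi1) : LinearOrder M where
  le := tauLE
  le_refl a := (realize_xi1.1 h a a a).1
  le_trans a b c := (realize_xi1.1 h a b c).2.1
  le_antisymm a b := (realize_xi1.1 h a b a).2.2.1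
  le_total a b := (realize_xi1.1 h a b a).2.2.2
  toDecidableLE := Classical.decRel _

theorem eq_top_of_realize_xi4 [Finite M] (h1 : M ⊨ xi1) (h2 : M ⊨ xi2)
    (h3 : M ⊨ xi3) {N : tau.Substructure M} (h4 : N ⊨ xi4) : N = ⊤ := by
  let _ := linearOrderOfRealizeXi1 h1
  have hbot : IsBot (tauC M) := fun a => (realize_xi2.1 h2 a).1
  have htop : IsTop (tauD M) := fun a => (realize_xi2.1 h2 a).2
  have hcov : ∀ a b : M, tauS a b → a ⋖ b := by
    intro a b hab
    obtain ⟨hle, hne, -⟩ := realize_xi3.1 h3 a b a hab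
    refine ⟨lt_of_le_of_ne hle hne, fun c hac hcb => ?_⟩
    rcases (realize_xi3.1 h3 a b c hab).2.2 hac.le with rfl | hbc
    · exact hac.false
    · exact hcb.not_ge hbc
  refine SetLike.coe_injective <|
    Set.eq_univ_of_isBot_mem_of_covBy_closed hbot (N.constants_mem TauFun.c) ?_
  intro x hx hx_max
  have hx_ne : (⟨x, hx⟩ : N) ≠ tauD N := fun h => hx_max <| by
    rw [show x = tauD M from (congrArg Subtype.val h).trans tauD_coe]
    exact htop.isMax
  obtain ⟨y, hy⟩ := realize_xi4.1 h4 _ hx_ne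
  exact ⟨y, y.2, hcov x y (tauS_coe.2 hy)⟩

theorem realize_phi_substructure [Finite M] {k : ℕ} (h : M ⊨ phi k) (N : tau.Substructure M) :
    N ⊨ phi k := by
  simp only [phi, Sentence.Realize, Formula.realize_inf, Formula.realize_not] at h ⊢
  obtain ⟨⟨⟨h1, h2⟩, h3⟩, h45⟩ := h
  refine ⟨⟨⟨N.realize_sentence_of_isUniversal isUniversal_xi1 h1,
    N.realize_sentence_of_isUniversal isUniversal_xi2 h2⟩,
    N.realize_sentence_of_isUniversal isUniversal_xi3 h3⟩, ?_⟩
  rintro ⟨h4, h5⟩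
  obtain rfl := eq_top_of_realize_xi4 h1 h2 h3 h4
  exact h45 ⟨(StrongHomClass.realize_sentence Substructure.topEquiv xi4).1 h4,
    (StrongHomClass.realize_sentence Substructure.topEquiv (xi5 k)).1 h5⟩

/-- **`φ_k` is hereditary over the class of all finite `τ`-structures**: every nonempty
substructure of a finite model of `φ_k` is again a model of `φ_k`. Equivalently, `¬φ_k` is
extension closed over finite `τ`-structures: if a nonempty substructure of a finite
`τ`-structure `B` satisfies `¬φ_k`, then so does `B`. -/
theorem phi_hereditary_finite (k : ℕ) :
    (∀ (M : Type) [tau.Structure M] [Finite M] [Nonempty M], M ⊨ phi k →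
      ∀ N : tau.Substructure M, (N : Set M).Nonempty → (N : Type) ⊨ phi k) ∧
    (∀ (B : Type) [tau.Structure B] [Finite B] [Nonempty B],
      ∀ N : tau.Substructure B, (N : Set B).Nonempty →
        (N : Type) ⊨ (∼(phi k) : tau.Sentence) → B ⊨ (∼(phi k) : tau.Sentence)) :=
  ⟨fun _ _ _ _ hM N _ => realize_phi_substructure hM N,
    fun _ _ _ _ N _ hN => (Sentence.realize_not _).2 fun hB =>
      (Sentence.realize_not _).1 hN (realize_phi_substructure hB N)⟩

end LTFinite
end
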